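/- Let F be a field, 1 ≤ b ≤ k, n ≥ 1, U ∈ F^{k×b}, V ∈ F^{k×n}, and let ℓ ≥ 2. Assume (U,V) is MDSb(ℓ−1), i.e. for every proper configuration (σ_1,A_1),…,(σ_{ℓ−1},A_{ℓ−1}) of order ℓ−1 (σ_i ∈ {0,…,b}, A_i ⊆ {1,…,n}, σ_i + |A_i| ≤ k), dim(⋂_{i=1}^{ℓ−1} (U_{≤σ_i} + V_{A_i})) = gid_k((σ_i,A_i)_i). Let (σ_1, A_1, δ_1), …, (σ_ℓ, A_ℓ, δ_ℓ) be an (ℓ,k)-null configuration: σ_i ∈ {0,…,b}, A_i ⊆ {1,…,n}, δ_i ∈ ℕ, with Σ_{i=1}^ℓ (σ_i + |A_i|) = (ℓ−1)·k, Σ_{i=1}^ℓ δ_i = k, and for every nonempty J ⊆ {1,…,ℓ}: min_{j∈J} σ_j + |⋂_{j∈J} A_j| + Σ_{j∈J} δ_j ≤ k. Further assume there exists J ⊆ {1,…,ℓ} with 2 ≤ |J| ≤ ℓ−1 for which this inequality is an equality. Then ⋂_{i=1}^ℓ (U_{≤σ_i} + V_{A_i}) = 0. -/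
import Mathlib


open Finset Matrix

noncomputable section

/-- The intersection `⋂_{j ∈ p} A j`, as a `Finset (Fin n)`. -/
def interSet {ℓ n : ℕ} (A : Fin ℓ → Finset (Fin n)) (p : Finset (Fin ℓ)) : Finset (Fin n) :=
  Finset.univ.filter fun x => ∀ j ∈ p, x ∈ A j

/-- The dimension-`m` null intersection property: for every partition of `{1,…,ℓ}`
(presented as a `Finpartition` of `Finset.univ : Finset (Fin ℓ)`) into nonempty parts
`P_1,…,P_s`, we have `Σ_i |⋂_{j ∈ P_i} A_j| ≤ (s-1)·m`. -/
def NullInter {ℓ n : ℕ} (m : ℕ) (A : Fin ℓ → Finset (Fin n)) : Prop :=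
  ∀ P : Finpartition (Finset.univ : Finset (Fin ℓ)),
    ∑ p ∈ P.parts, (interSet A p).card ≤ (P.parts.card - 1) * m

/-- Span of the columns of `M` indexed by `A`. -/
def colSpan {K : Type*} [Field K] {k n : ℕ} (M : Matrix (Fin k) (Fin n) K)
    (A : Finset (Fin n)) : Submodule K (Fin k → K) :=
  Submodule.span K ((fun j i => M i j) '' (A : Set (Fin n)))

/-- Span of the first `σ` columns of `M`. -/
def colSpanLT {K : Type*} [Field K] {k b : ℕ} (M : Matrix (Fin k) (Fin b) K)
    (σ : ℕ) : Submodule K (Fin k → K) :=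
  Submodule.span K ((fun j i => M i j) '' {j : Fin b | (j : ℕ) < σ})

/-- The minimum of `σ` over the set `p` (for nonempty `p`, this is `min_{j ∈ p} σ j`). -/
def partMin {ℓ : ℕ} (σ : Fin ℓ → ℕ) (p : Finset (Fin ℓ)) : ℕ :=
  sInf (σ '' (p : Set (Fin ℓ)))

/-- The generic intersection dimension `gid_m((σ_i, A_i)_i)`: the maximum over all
partitions of `{1,…,ℓ}` into nonempty parts `P_1,…,P_s` of
`-m(s-1) + Σ_i (min_{j ∈ P_i} σ_j + |⋂_{j ∈ P_i} A_j|)`. -/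
def gid {ℓ n : ℕ} (m : ℕ) (σ : Fin ℓ → ℕ) (A : Fin ℓ → Finset (Fin n)) : ℤ :=
  sSup { v : ℤ | ∃ P : Finpartition (Finset.univ : Finset (Fin ℓ)),
    v = -(m : ℤ) * ((P.parts.card : ℤ) - 1)
      + ∑ p ∈ P.parts, ((partMin σ p : ℤ) + ((interSet A p).card : ℤ)) }

section Helpers

variable {ℓ n m : ℕ}

lemma mem_interSet {A : Fin ℓ → Finset (Fin n)} {p : Finset (Fin ℓ)} {x : Fin n} :
    x ∈ interSet A p ↔ ∀ j ∈ p, x ∈ A j := by simp [interSet]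

lemma interSet_singleton (A : Fin ℓ → Finset (Fin n)) (j : Fin ℓ) : interSet A {j} = A j := by
  ext x; simp [interSet]

lemma interSet_subset {A : Fin ℓ → Finset (Fin n)} {p : Finset (Fin ℓ)} {j : Fin ℓ}
    (hj : j ∈ p) : interSet A p ⊆ A j := fun _ hx => mem_interSet.1 hx j hj

lemma partMin_le {σ : Fin ℓ → ℕ} {p : Finset (Fin ℓ)} {j : Fin ℓ} (hj : j ∈ p) :
    partMin σ p ≤ σ j := Nat.sInf_le ⟨j, hj, rfl⟩

lemma exists_partMin {σ : Fin ℓ → ℕ} {p : Finset (Fin ℓ)} (h : p.Nonempty) :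
    ∃ j ∈ p, σ j = partMin σ p := by
  have : partMin σ p ∈ σ '' (p : Set (Fin ℓ)) :=
    Nat.sInf_mem ((Finset.coe_nonempty.2 h).image σ)
  obtain ⟨j, hj, e⟩ := this
  exact ⟨j, hj, e⟩

lemma partMin_singleton (σ : Fin ℓ → ℕ) (j : Fin ℓ) : partMin σ {j} = σ j := by
  apply le_antisymm (partMin_le (Finset.mem_singleton_self j))
  obtain ⟨i, hi, e⟩ := exists_partMin (σ := σ) (Finset.singleton_nonempty j)
  rw [Finset.mem_singleton] at hi; subst hi; omega

lemma partMin_eq_inf' {σ : Fin ℓ → ℕ} {p : Finset (Fin ℓ)} (h : p.Nonempty) :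
    partMin σ p = p.inf' h σ := by
  apply le_antisymm
  · obtain ⟨j, hj, e⟩ := p.exists_mem_eq_inf' h σ
    rw [e]; exact partMin_le hj
  · obtain ⟨j, hj, e⟩ := exists_partMin (σ := σ) h
    rw [← e]; exact Finset.inf'_le _ hj

lemma partMin_biUnion {σ : Fin ℓ → ℕ} {p : Finset (Fin m)} (hp : p.Nonempty)
    {T : Fin m → Finset (Fin ℓ)} (hT : ∀ i, (T i).Nonempty) :
    partMin σ (p.biUnion T) = partMin (fun i => partMin σ (T i)) p := by
  rw [partMin_eq_inf' (hp.biUnion fun b _ => hT b), partMin_eq_inf' hp,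
    Finset.inf'_biUnion (t := T) (f := σ) hp hT]
  exact Finset.inf'_congr hp rfl fun i _ => (partMin_eq_inf' (hT i)).symm

lemma interSet_biUnion {A : Fin ℓ → Finset (Fin n)} (T : Fin m → Finset (Fin ℓ))
    (p : Finset (Fin m)) :
    interSet (fun i => interSet A (T i)) p = interSet A (p.biUnion T) := by
  ext x
  simp only [mem_interSet, Finset.mem_biUnion]
  constructor
  · rintro h j ⟨i, hi, hji⟩; exact h i hi j hji
  · intro h i hi j hji; exact h j ⟨i, hi, hji⟩

lemma sum_biUnion_le' {α β : Type*} [DecidableEq α] [DecidableEq β] (s : Finset α)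
    (t : α → Finset β) (f : β → ℕ) :
    ∑ x ∈ s.biUnion t, f x ≤ ∑ i ∈ s, ∑ x ∈ t i, f x := by
  induction s using Finset.induction with
  | empty => simp
  | @insert a s' h ih =>
    rw [Finset.biUnion_insert, Finset.sum_insert h]
    calc ∑ x ∈ t a ∪ s'.biUnion t, f x
        ≤ ∑ x ∈ t a, f x + ∑ x ∈ s'.biUnion t, f x := by
          have := Finset.sum_union_inter (s₁ := t a) (s₂ := s'.biUnion t) (f := f)
          omega
      _ ≤ _ := by omega

lemma gid_val_le {k : ℕ} (σ : Fin ℓ → ℕ) (A : Fin ℓ → Finset (Fin n)) (δ : Fin ℓ → ℕ)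
    (hnull : ∀ J : Finset (Fin ℓ), J.Nonempty →
      partMin σ J + (interSet A J).card + ∑ j ∈ J, δ j ≤ k)
    (T : Fin m → Finset (Fin ℓ)) (hT : ∀ i, (T i).Nonempty)
    (P : Finpartition (Finset.univ : Finset (Fin m))) :
    -(k : ℤ) * ((P.parts.card : ℤ) - 1)
      + ∑ p ∈ P.parts, ((partMin (fun i => partMin σ (T i)) p : ℤ)
          + ((interSet (fun i => interSet A (T i)) p).card : ℤ))
      ≤ (k : ℤ) - ((∑ j ∈ Finset.univ.biUnion T, δ j : ℕ) : ℤ) := by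
  have hterm : ∀ p ∈ P.parts,
      (partMin (fun i => partMin σ (T i)) p : ℤ)
        + ((interSet (fun i => interSet A (T i)) p).card : ℤ)
      ≤ (k : ℤ) - ((∑ j ∈ p.biUnion T, δ j : ℕ) : ℤ) := by
    intro p hp
    have hpne : p.Nonempty := P.nonempty_of_mem_parts hp
    rw [← partMin_biUnion hpne hT, interSet_biUnion]
    have h1 := hnull (p.biUnion T) (hpne.biUnion fun b _ => hT b)
    omega
  have hsum2 : ∑ j ∈ Finset.univ.biUnion T, δ j
      ≤ ∑ p ∈ P.parts, (∑ j ∈ p.biUnion T, δ j) := by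
    calc ∑ j ∈ Finset.univ.biUnion T, δ j
        = ∑ j ∈ (P.parts.biUnion id).biUnion T, δ j := by
          rw [show P.parts.biUnion id = Finset.univ from by
            rw [← Finset.sup_eq_biUnion]; exact P.sup_parts]
      _ = ∑ j ∈ P.parts.biUnion (fun p => p.biUnion T), δ j := by
          rw [Finset.biUnion_biUnion]; rfl
      _ ≤ _ := sum_biUnion_le' _ _ _
  have hS : ∑ p ∈ P.parts, ((partMin (fun i => partMin σ (T i)) p : ℤ)
          + ((interSet (fun i => interSet A (T i)) p).card : ℤ))
      ≤ ∑ p ∈ P.parts, ((k : ℤ) - ((∑ j ∈ p.biUnion T, δ j : ℕ) : ℤ)) :=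
    Finset.sum_le_sum hterm
  have hK : ∑ p ∈ P.parts, ((k : ℤ) - ((∑ j ∈ p.biUnion T, δ j : ℕ) : ℤ))
      = (P.parts.card : ℤ) * k - ∑ p ∈ P.parts, ((∑ j ∈ p.biUnion T, δ j : ℕ) : ℤ) := by
    rw [Finset.sum_sub_distrib, Finset.sum_const, nsmul_eq_mul]
  have hD : ((∑ j ∈ Finset.univ.biUnion T, δ j : ℕ) : ℤ)
      ≤ ∑ p ∈ P.parts, ((∑ j ∈ p.biUnion T, δ j : ℕ) : ℤ) := by
    exact_mod_cast hsum2
  linarith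

lemma univ_ne_bot (hm : 1 ≤ m) : (Finset.univ : Finset (Fin m)) ≠ ⊥ := by
  have : Nonempty (Fin m) := ⟨⟨0, by omega⟩⟩
  simpa [Finset.bot_eq_empty] using (Finset.univ_nonempty (α := Fin m)).ne_empty

lemma gid_le_of {k : ℕ} (hm : 1 ≤ m) (σ : Fin ℓ → ℕ) (A : Fin ℓ → Finset (Fin n))
    (δ : Fin ℓ → ℕ)
    (hnull : ∀ J : Finset (Fin ℓ), J.Nonempty →
      partMin σ J + (interSet A J).card + ∑ j ∈ J, δ j ≤ k)
    (T : Fin m → Finset (Fin ℓ)) (hT : ∀ i, (T i).Nonempty) :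
    gid k (fun i => partMin σ (T i)) (fun i => interSet A (T i))
      ≤ (k : ℤ) - ((∑ j ∈ Finset.univ.biUnion T, δ j : ℕ) : ℤ) := by
  apply csSup_le
  · exact ⟨_, ⟨Finpartition.indiscrete (univ_ne_bot hm), rfl⟩⟩
  · rintro v ⟨P, rfl⟩
    exact gid_val_le σ A δ hnull T hT P

lemma gid_ge_of {k : ℕ} (hm : 1 ≤ m) (σ : Fin ℓ → ℕ) (A : Fin ℓ → Finset (Fin n))
    (δ : Fin ℓ → ℕ)
    (hnull : ∀ J : Finset (Fin ℓ), J.Nonempty →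
      partMin σ J + (interSet A J).card + ∑ j ∈ J, δ j ≤ k)
    (T : Fin m → Finset (Fin ℓ)) (hT : ∀ i, (T i).Nonempty) :
    (partMin σ (Finset.univ.biUnion T) : ℤ)
        + ((interSet A (Finset.univ.biUnion T)).card : ℤ)
      ≤ gid k (fun i => partMin σ (T i)) (fun i => interSet A (T i)) := by
  have : Nonempty (Fin m) := ⟨⟨0, by omega⟩⟩
  apply le_csSup
  · refine ⟨(k : ℤ) - ((∑ j ∈ Finset.univ.biUnion T, δ j : ℕ) : ℤ), ?_⟩
    rintro v ⟨P, rfl⟩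
    exact gid_val_le σ A δ hnull T hT P
  · refine ⟨Finpartition.indiscrete (univ_ne_bot hm), ?_⟩
    rw [Finpartition.indiscrete_parts, Finset.card_singleton, Finset.sum_singleton,
      ← partMin_biUnion Finset.univ_nonempty hT, interSet_biUnion]
    ring

lemma exists_surj_onto {m ℓ : ℕ} (J : Finset (Fin ℓ)) {j₀ : Fin ℓ} (hj₀ : j₀ ∈ J)
    (h : J.card ≤ m) : ∃ c : Fin m → Fin ℓ, (∀ i, c i ∈ J) ∧ ∀ j ∈ J, ∃ i, c i = j := by
  refine ⟨fun i => if h' : (i : ℕ) < J.card then J.orderEmbOfFin rfl ⟨i, h'⟩ else j₀,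
    fun i => ?_, fun j hj => ?_⟩
  · dsimp only
    split
    · exact Finset.orderEmbOfFin_mem _ _ _
    · exact hj₀
  · have hr : j ∈ Set.range (J.orderEmbOfFin rfl) := by
      rw [Finset.range_orderEmbOfFin]; exact hj
    obtain ⟨i, hi⟩ := hr
    refine ⟨⟨(i : ℕ), lt_of_lt_of_le i.2 h⟩, ?_⟩
    have hlt : ((⟨(i : ℕ), lt_of_lt_of_le i.2 h⟩ : Fin m) : ℕ) < J.card := i.2
    dsimp only
    rw [dif_pos hlt]
    exact hi

lemma colSpanLT_mono {K : Type*} [Field K] {k b : ℕ} (M : Matrix (Fin k) (Fin b) K)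
    {s t : ℕ} (h : s ≤ t) : colSpanLT M s ≤ colSpanLT M t :=
  Submodule.span_mono (Set.image_mono fun _ hj => lt_of_lt_of_le hj h)

lemma colSpan_mono {K : Type*} [Field K] {k n : ℕ} (M : Matrix (Fin k) (Fin n) K)
    {s t : Finset (Fin n)} (h : s ⊆ t) : colSpan M s ≤ colSpan M t :=
  Submodule.span_mono (Set.image_mono (by exact_mod_cast h))

end Helpers

/-- If `(U, V)` is `MDSb(ℓ-1)` and an `(ℓ,k)`-null configuration has some tight set `J`
with `2 ≤ |J| ≤ ℓ-1`, then the corresponding intersection vanishes. -/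
theorem null_configuration_tight_set_case
    (F : Type*) [Field F] (b k n ℓ : ℕ) (hb : 1 ≤ b) (hbk : b ≤ k) (hn : 1 ≤ n)
    (hℓ : 2 ≤ ℓ)
    (U : Matrix (Fin k) (Fin b) F) (V : Matrix (Fin k) (Fin n) F)
    (hMDSb : ∀ (σ : Fin (ℓ - 1) → ℕ) (A : Fin (ℓ - 1) → Finset (Fin n)),
      (∀ i, σ i ≤ b) → (∀ i, σ i + (A i).card ≤ k) →
      (Module.finrank F ↥(⨅ i, colSpanLT U (σ i) ⊔ colSpan V (A i)) : ℤ) = gid k σ A)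
    (σ : Fin ℓ → ℕ) (A : Fin ℓ → Finset (Fin n)) (δ : Fin ℓ → ℕ)
    (hσ : ∀ i, σ i ≤ b)
    (hsum : (∑ i, (σ i + (A i).card)) = (ℓ - 1) * k)
    (hδ : (∑ i, δ i) = k)
    (hnull : ∀ J : Finset (Fin ℓ), J.Nonempty →
      partMin σ J + (interSet A J).card + ∑ j ∈ J, δ j ≤ k)
    (htight : ∃ J : Finset (Fin ℓ), 2 ≤ J.card ∧ J.card ≤ ℓ - 1 ∧
      partMin σ J + (interSet A J).card + ∑ j ∈ J, δ j = k) :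
    (⨅ i, colSpanLT U (σ i) ⊔ colSpan V (A i)) = ⊥ := by
  obtain ⟨J, hJ2, hJle, htt⟩ := htight
  have hm : 1 ≤ ℓ - 1 := by omega
  have hNE : Nonempty (Fin (ℓ - 1)) := ⟨⟨0, by omega⟩⟩
  have hJne : J.Nonempty := Finset.card_pos.1 (by omega)
  obtain ⟨j₀, hj₀⟩ := hJne
  have hJne : J.Nonempty := ⟨j₀, hj₀⟩
  set W := ⨅ i, colSpanLT U (σ i) ⊔ colSpan V (A i) with hW
  have htt' : (partMin σ J : ℤ) + ((interSet A J).card : ℤ)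
      = (k : ℤ) - ((∑ j ∈ J, δ j : ℕ) : ℤ) := by omega
  -- Step 1: constant configuration computes dim of W* := U_{σ*} ⊔ V_{A*}
  have hD1 : (Finset.univ : Finset (Fin (ℓ - 1))).biUnion (fun _ => J) = J := by
    ext x
    simp only [Finset.mem_biUnion, Finset.mem_univ, true_and]
    exact ⟨fun ⟨_, hx⟩ => hx, fun hx => ⟨Classical.arbitrary _, hx⟩⟩
  have hσJb : partMin σ J ≤ b := by
    obtain ⟨j, hj, e⟩ := exists_partMin (σ := σ) hJne
    rw [← e]; exact hσ j
  have hcond1 : ∀ i : Fin (ℓ - 1),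
      (fun _ : Fin (ℓ - 1) => partMin σ J) i
        + ((fun _ : Fin (ℓ - 1) => interSet A J) i).card ≤ k := by
    intro i
    have := hnull J hJne
    simpa using by omega
  have h1 := hMDSb (fun _ => partMin σ J) (fun _ => interSet A J) (fun _ => hσJb) hcond1
  rw [iInf_const] at h1
  have hgle1 := gid_le_of (k := k) hm σ A δ hnull (fun _ => J) (fun _ => hJne)
  rw [hD1] at hgle1
  have hgge1 := gid_ge_of (k := k) hm σ A δ hnull (fun _ => J) (fun _ => hJne)
  rw [hD1] at hgge1
  have hgid1 : gid k (fun _ : Fin (ℓ - 1) => partMin σ J)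
      (fun _ : Fin (ℓ - 1) => interSet A J) = (k : ℤ) - ((∑ j ∈ J, δ j : ℕ) : ℤ) :=
    le_antisymm hgle1 (htt' ▸ hgge1)
  rw [hgid1] at h1
  -- Step 2: configuration enumerating J shows ⋂_{j∈J} = W*
  obtain ⟨c₂, hc₂mem, hc₂surj⟩ := exists_surj_onto J hj₀ hJle
  have hcond21 : ∀ i, σ (c₂ i) ≤ b := fun i => hσ _
  have hcond22 : ∀ i, σ (c₂ i) + (A (c₂ i)).card ≤ k := by
    intro i
    have := hnull {c₂ i} (Finset.singleton_nonempty _)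
    rw [partMin_singleton, interSet_singleton] at this
    omega
  have h2 := hMDSb (fun i => σ (c₂ i)) (fun i => A (c₂ i)) hcond21 hcond22
  have hD2 : Finset.univ.biUnion (fun i => ({c₂ i} : Finset (Fin ℓ))) = J := by
    ext x
    simp only [Finset.mem_biUnion, Finset.mem_univ, true_and, Finset.mem_singleton]
    constructor
    · rintro ⟨i, rfl⟩; exact hc₂mem i
    · intro hx
      obtain ⟨i, hi⟩ := hc₂surj x hx
      exact ⟨i, hi.symm⟩
  have hgle2 := gid_le_of (k := k) hm σ A δ hnull (fun i => {c₂ i})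
    (fun _ => Finset.singleton_nonempty _)
  rw [hD2] at hgle2
  have hgge2 := gid_ge_of (k := k) hm σ A δ hnull (fun i => {c₂ i})
    (fun _ => Finset.singleton_nonempty _)
  rw [hD2] at hgge2
  simp only [partMin_singleton, interSet_singleton] at hgle2 hgge2
  have hgid2 : gid k (fun i => σ (c₂ i)) (fun i => A (c₂ i))
      = (k : ℤ) - ((∑ j ∈ J, δ j : ℕ) : ℤ) := le_antisymm hgle2 (htt' ▸ hgge2)
  rw [hgid2] at h2
  have hle21 : colSpanLT U (partMin σ J) ⊔ colSpan V (interSet A J)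
      ≤ ⨅ i, colSpanLT U (σ (c₂ i)) ⊔ colSpan V (A (c₂ i)) :=
    le_iInf fun i => sup_le_sup (colSpanLT_mono U (partMin_le (hc₂mem i)))
      (colSpan_mono V (interSet_subset (hc₂mem i)))
  have hfr : Module.finrank F ↥(colSpanLT U (partMin σ J) ⊔ colSpan V (interSet A J))
      = Module.finrank F ↥(⨅ i, colSpanLT U (σ (c₂ i)) ⊔ colSpan V (A (c₂ i))) := by
    have e1 : (Module.finrank F ↥(colSpanLT U (partMin σ J) ⊔ colSpan V (interSet A J)) : ℤ)
        = (k : ℤ) - ((∑ j ∈ J, δ j : ℕ) : ℤ) := h1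
    have e2 : (Module.finrank F ↥(⨅ i, colSpanLT U (σ (c₂ i)) ⊔ colSpan V (A (c₂ i))) : ℤ)
        = (k : ℤ) - ((∑ j ∈ J, δ j : ℕ) : ℤ) := h2
    exact_mod_cast e1.trans e2.symm
  have heq := Submodule.eq_of_le_of_finrank_eq hle21 hfr
  have hWle2 : W ≤ ⨅ i, colSpanLT U (σ (c₂ i)) ⊔ colSpan V (A (c₂ i)) :=
    le_iInf fun i => iInf_le _ (c₂ i)
  rw [← heq] at hWle2
  -- Step 3: collapsed configuration
  have hK'card : (insert j₀ Jᶜ).card ≤ ℓ - 1 := by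
    have h1' : (insert j₀ Jᶜ).card ≤ Jᶜ.card + 1 := Finset.card_insert_le _ _
    have h2' : Jᶜ.card = ℓ - J.card := by
      rw [Finset.card_compl]; simp
    omega
  obtain ⟨c₃, hc₃mem, hc₃surj⟩ := exists_surj_onto (insert j₀ Jᶜ)
    (Finset.mem_insert_self _ _) hK'card
  set T₃ : Fin (ℓ - 1) → Finset (Fin ℓ) :=
    fun i => if c₃ i ∈ J then J else {c₃ i} with hT₃def
  have hT₃ : ∀ i, (T₃ i).Nonempty := by
    intro i
    rw [hT₃def]
    dsimp only
    split
    · exact hJne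
    · exact Finset.singleton_nonempty _
  have hT₃pos : ∀ i, c₃ i ∈ J → T₃ i = J := by
    intro i h; rw [hT₃def]; exact if_pos h
  have hT₃neg : ∀ i, c₃ i ∉ J → T₃ i = {c₃ i} := by
    intro i h; rw [hT₃def]; exact if_neg h
  have hD3 : Finset.univ.biUnion T₃ = Finset.univ := by
    ext x
    simp only [Finset.mem_biUnion, Finset.mem_univ, true_and, iff_true]
    by_cases hx : x ∈ J
    · obtain ⟨i, hi⟩ := hc₃surj j₀ (Finset.mem_insert_self _ _)
      refine ⟨i, ?_⟩
      rw [hT₃pos i (hi ▸ hj₀)]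
      exact hx
    · obtain ⟨i, hi⟩ := hc₃surj x (Finset.mem_insert_of_mem (Finset.mem_compl.2 hx))
      refine ⟨i, ?_⟩
      rw [hT₃neg i (hi ▸ hx), hi]
      exact Finset.mem_singleton_self x
  have hcond31 : ∀ i, partMin σ (T₃ i) ≤ b := by
    intro i
    obtain ⟨j, hj, e⟩ := exists_partMin (σ := σ) (hT₃ i)
    rw [← e]; exact hσ j
  have hcond32 : ∀ i, partMin σ (T₃ i) + (interSet A (T₃ i)).card ≤ k := by
    intro i
    have := hnull (T₃ i) (hT₃ i)
    omega
  have h3 := hMDSb (fun i => partMin σ (T₃ i)) (fun i => interSet A (T₃ i)) hcond31 hcond32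
  have hgle3 := gid_le_of (k := k) hm σ A δ hnull T₃ hT₃
  rw [hD3] at hgle3
  have hδ' : ((∑ j ∈ (Finset.univ : Finset (Fin ℓ)), δ j : ℕ) : ℤ) = (k : ℤ) := by
    exact_mod_cast congrArg (Nat.cast : ℕ → ℤ) hδ
  rw [hδ'] at hgle3
  have hfr3 : Module.finrank F
      ↥(⨅ i, colSpanLT U (partMin σ (T₃ i)) ⊔ colSpan V (interSet A (T₃ i))) = 0 := by
    have e3 : (Module.finrank F
        ↥(⨅ i, colSpanLT U (partMin σ (T₃ i)) ⊔ colSpan V (interSet A (T₃ i))) : ℤ)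
        = gid k (fun i => partMin σ (T₃ i)) (fun i => interSet A (T₃ i)) := h3
    have := e3.trans_le hgle3
    omega
  have hbot3 : (⨅ i, colSpanLT U (partMin σ (T₃ i)) ⊔ colSpan V (interSet A (T₃ i))) = ⊥ :=
    Submodule.finrank_eq_zero.1 hfr3
  have hWle3 : W ≤ ⨅ i, colSpanLT U (partMin σ (T₃ i)) ⊔ colSpan V (interSet A (T₃ i)) := by
    refine le_iInf fun i => ?_
    by_cases hci : c₃ i ∈ J
    · rw [hT₃pos i hci]
      exact hWle2
    · rw [hT₃neg i hci, partMin_singleton, interSet_singleton]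
      exact iInf_le _ (c₃ i)
  rw [hbot3] at hWle3
  exact le_bot_iff.1 hWle3
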